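/- Let G be a simple connected graph with closed neighborhood ideal N_G. Then the v-number of N_G satisfies v(N_G) = min{ |N[U]∖D| : D is a minimal dominating set of G and U ⊆ P_N(D) dominates D }. -/

import Mathlib

open Finset MvPolynomial

noncomputable section
open scoped Classical

variable {V : Type*}

/-- The closed neighborhood of a vertex, as a finite set. -/
def closedNbhd [Fintype V] (G : SimpleGraph V) (v : V) : Finset V :=
  Finset.univ.filter fun u => u = v ∨ G.Adj v u

/-- The closed neighborhood of a set of vertices. -/
def closedNbhdSet [Fintype V] (G : SimpleGraph V) (A : Finset V) : Finset V :=
  A.biUnion (closedNbhd G)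

/-- A dominating set of a graph. -/
def IsDominatingSet [Fintype V] (G : SimpleGraph V) (D : Finset V) : Prop :=
  ∀ v : V, ∃ u ∈ D, v ∈ closedNbhd G u

/-- A minimal dominating set: dominating, and no proper subset dominates. -/
def IsMinimalDominatingSet [Fintype V] (G : SimpleGraph V) (D : Finset V) : Prop :=
  IsDominatingSet G D ∧ ∀ D' ⊂ D, ¬ IsDominatingSet G D'

/-- The set of external and self-private neighbors of D: the vertices whose
closed neighborhood meets D in exactly one vertex. -/
def privateNbrs [Fintype V] (G : SimpleGraph V) (D : Finset V) : Finset V :=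
  Finset.univ.filter fun v => (closedNbhd G v ∩ D).card = 1

/-- The closed neighborhood ideal of a graph, in the polynomial ring over K with
one variable for each vertex. -/
def cnIdeal (K : Type*) [Field K] [Fintype V] (G : SimpleGraph V) :
    Ideal (MvPolynomial V K) :=
  Ideal.span (Set.range fun v => ∏ u ∈ closedNbhd G v, X u)

/-- The ideal generated by the variables indexed by a set of vertices D. -/
def vertexIdeal (K : Type*) [Field K] (D : Finset V) : Ideal (MvPolynomial V K) :=
  Ideal.span ((fun v => (X v : MvPolynomial V K)) '' ↑D)

/-- The v-number of a graded ideal: the least degree d of a homogeneous polynomial f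
such that the colon ideal (I : f) is an associated prime of S/I. -/
def vNumber {K : Type*} [Field K] (I : Ideal (MvPolynomial V K)) : ℕ :=
  sInf {d : ℕ | ∃ f : MvPolynomial V K, f.IsHomogeneous d ∧
    Submodule.colon I (Ideal.span {f}) ∈
      associatedPrimes (MvPolynomial V K) (MvPolynomial V K ⧸ I)}

end


noncomputable section AuxProof
open Finset MvPolynomial
open scoped Classical
set_option linter.unusedSectionVars false

variable {V : Type*} {K : Type*} [Field K] [Fintype V]

/-- indicator finsupp of a finset -/
def indF (s : Finset V) : V →₀ ℕ := ∑ u ∈ s, Finsupp.single u 1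

lemma indF_apply (s : Finset V) (w : V) : indF s w = if w ∈ s then 1 else 0 := by
  classical
  simp [indF, Finsupp.finset_sum_apply, Finsupp.single_apply, Finset.sum_ite_eq' s w (fun _ => 1)]

lemma indF_support (s : Finset V) : (indF s).support = s := by
  ext w; simp [Finsupp.mem_support_iff, indF_apply]

lemma indF_le_iff (s : Finset V) (m : V →₀ ℕ) : indF s ≤ m ↔ ∀ w ∈ s, 1 ≤ m w := by
  rw [Finsupp.le_iff, indF_support]
  refine forall₂_congr fun w hw => ?_
  rw [indF_apply, if_pos hw]

lemma indF_degree (s : Finset V) : (indF s).degree = s.card := by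
  rw [Finsupp.degree_apply, indF_support]
  simp [indF_apply]

lemma prod_X_eq_monomial_indF (s : Finset V) :
    (∏ u ∈ s, (X u : MvPolynomial V K)) = monomial (indF s) 1 := by
  rw [← prod_X_pow_eq_monomial, indF_support]
  refine Finset.prod_congr rfl fun w hw => ?_
  rw [indF_apply, if_pos hw, pow_one]

lemma mem_closedNbhd {G : SimpleGraph V} {v w : V} :
    w ∈ closedNbhd G v ↔ w = v ∨ G.Adj v w := by simp [closedNbhd]

lemma closedNbhd_comm {G : SimpleGraph V} {v w : V} :
    w ∈ closedNbhd G v ↔ v ∈ closedNbhd G w := by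
  rw [mem_closedNbhd, mem_closedNbhd]
  exact or_congr eq_comm (G.adj_comm v w)

lemma mem_cnIdeal_iff {G : SimpleGraph V} {f : MvPolynomial V K} :
    f ∈ cnIdeal K G ↔ ∀ m ∈ f.support, ∃ v, indF (closedNbhd G v) ≤ m := by
  have h : (Set.range fun v => ∏ u ∈ closedNbhd G v, (X u : MvPolynomial V K)) =
      (fun m => monomial m (1 : K)) '' (Set.range fun v => indF (closedNbhd G v)) := by
    rw [← Set.range_comp]
    refine congrArg _ (funext fun v => ?_)
    exact prod_X_eq_monomial_indF _
  rw [cnIdeal, h, mem_ideal_span_monomial_image]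
  simp only [Set.mem_range, exists_exists_eq_and]

lemma monomial_mem_cnIdeal_iff {G : SimpleGraph V} {m : V →₀ ℕ} :
    (monomial m (1 : K)) ∈ cnIdeal K G ↔ ∃ v, indF (closedNbhd G v) ≤ m := by
  rw [mem_cnIdeal_iff]
  simp [support_monomial]

/-- The substitution killing the variables in D. -/
def killD (K : Type*) [Field K] (D : Finset V) : MvPolynomial V K →ₐ[K] MvPolynomial V K :=
  aeval (fun v => if v ∈ D then 0 else X v)

lemma killD_monomial_avoid {D : Finset V} {m : V →₀ ℕ} (c : K) (h : ∀ i ∈ D, m i = 0) :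
    killD K D (monomial m c) = monomial m c := by
  rw [killD, aeval_monomial]
  have : (m.prod fun i k => (if i ∈ D then 0 else (X i : MvPolynomial V K)) ^ k)
      = monomial m 1 := by
    rw [← prod_X_pow_eq_monomial, Finsupp.prod]
    refine Finset.prod_congr rfl fun i hi => ?_
    have hiD : i ∉ D := fun hiD => (Finsupp.mem_support_iff.mp hi) (h i hiD)
    rw [if_neg hiD]
  rw [this, algebraMap_eq, C_mul_monomial, mul_one]

lemma killD_monomial_touch {D : Finset V} {m : V →₀ ℕ} (c : K) {i₀ : V} (hi₀ : i₀ ∈ D)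
    (h : m i₀ ≠ 0) : killD K D (monomial m c) = 0 := by
  rw [killD, aeval_monomial, Finsupp.prod]
  rw [Finset.prod_eq_zero (Finsupp.mem_support_iff.mpr h)
    (by rw [if_pos hi₀]; exact zero_pow h), mul_zero]

lemma killD_ne_zero {D : Finset V} {f : MvPolynomial V K}
    (hf : f ∉ Ideal.span ((fun v => (X v : MvPolynomial V K)) '' ↑D)) :
    killD K D f ≠ 0 := by
  have h' : ¬ ∀ m ∈ f.support, ∃ i ∈ (↑D : Set V), (m : V →₀ ℕ) i ≠ 0 := by
    intro h; exact hf (mem_ideal_span_X_image.mpr (by simpa using h))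
  push_neg at h'
  obtain ⟨m, hm, hmD⟩ := h'
  have hco : coeff m (killD K D f) = coeff m f := by
    conv_lhs => rw [f.as_sum, map_sum, coeff_sum]
    rw [Finset.sum_eq_single m]
    · rw [killD_monomial_avoid _ (by simpa using hmD), coeff_monomial, if_pos rfl]
    · intro b hb hbm
      by_cases hbav : ∀ i ∈ D, b i = 0
      · rw [killD_monomial_avoid _ hbav, coeff_monomial, if_neg hbm]
      · push_neg at hbav
        obtain ⟨i₀, hi₀, hbi₀⟩ := hbav
        rw [killD_monomial_touch _ hi₀ hbi₀, coeff_zero]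
    · intro h; exact absurd hm h
  intro h0
  rw [h0, coeff_zero] at hco
  exact (mem_support_iff.mp hm) hco.symm

lemma vertexIdeal_isPrime (D : Finset V) :
    (Ideal.span ((fun v => (X v : MvPolynomial V K)) '' ↑D)).IsPrime := by
  have hker : ∀ g ∈ Ideal.span ((fun v => (X v : MvPolynomial V K)) '' ↑D),
      killD K D g = 0 := by
    have hle : Ideal.span ((fun v => (X v : MvPolynomial V K)) '' ↑D) ≤
        RingHom.ker (killD K D).toRingHom := by
      rw [Ideal.span_le]
      rintro _ ⟨i, hi, rfl⟩
      simp only [SetLike.mem_coe, RingHom.mem_ker, AlgHom.toRingHom_eq_coe,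
        RingHom.coe_coe, killD, aeval_X]
      rw [if_pos (by exact_mod_cast hi)]
    intro g hg
    exact RingHom.mem_ker.mp (hle hg)
  constructor
  · intro htop
    have h1 : (1 : MvPolynomial V K) ∈ _ := htop ▸ Submodule.mem_top
    have := hker 1 h1
    rw [map_one] at this
    exact one_ne_zero this
  · intro f g hfg
    by_contra hcon
    push_neg at hcon
    have h1 := killD_ne_zero hcon.1
    have h2 := killD_ne_zero hcon.2
    have := hker _ hfg
    rw [map_mul] at this
    exact (mul_ne_zero h1 h2) this

/-- Easy direction: an RHS witness gives a colon equal to the vertex ideal. -/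
lemma colon_eq_vertexIdeal {G : SimpleGraph V} {D U : Finset V}
    (hDdom : IsDominatingSet G D) (hU : U ⊆ privateNbrs G D)
    (hDU : D ⊆ closedNbhdSet G U) :
    Submodule.colon (cnIdeal K G)
        (Ideal.span {monomial (indF (closedNbhdSet G U \ D)) (1 : K)})
      = Ideal.span ((fun v => (X v : MvPolynomial V K)) '' ↑D) := by
  set s : Finset V := closedNbhdSet G U \ D with hs
  set f : MvPolynomial V K := monomial (indF s) 1 with hf
  have hIP : cnIdeal K G ≤ Ideal.span ((fun v => (X v : MvPolynomial V K)) '' ↑D) := by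
    rw [cnIdeal, Ideal.span_le]
    rintro _ ⟨v, rfl⟩
    obtain ⟨d, hdD, hvd⟩ := hDdom v
    have hdv : d ∈ closedNbhd G v := closedNbhd_comm.mp hvd
    show (∏ u ∈ closedNbhd G v, (X u : MvPolynomial V K)) ∈ _
    rw [SetLike.mem_coe, prod_X_eq_monomial_indF, mem_ideal_span_X_image]
    intro m hm
    rw [support_monomial, if_neg one_ne_zero, Finset.mem_singleton] at hm
    subst hm
    exact ⟨d, hdD, by rw [indF_apply, if_pos hdv]; exact one_ne_zero⟩
  have hfP : f ∉ Ideal.span ((fun v => (X v : MvPolynomial V K)) '' ↑D) := by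
    rw [mem_ideal_span_X_image]
    push_neg
    refine ⟨indF s, ?_, fun i hiD => ?_⟩
    · rw [hf, support_monomial, if_neg one_ne_zero]; exact Finset.mem_singleton_self _
    · rw [indF_apply, if_neg (fun hins => (Finset.mem_sdiff.mp hins).2 hiD)]
  apply le_antisymm
  · intro r hr
    have hrf : r * f ∈ cnIdeal K G := by
      rw [← smul_eq_mul]
      exact Submodule.mem_colon.mp hr f (Ideal.subset_span rfl)
    have := hIP hrf
    rcases (vertexIdeal_isPrime D).mem_or_mem this with h | h
    · exact h
    · exact absurd h hfP
  · rw [Ideal.span_le]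
    rintro _ ⟨d, hdD, rfl⟩
    have hX : (X d : MvPolynomial V K) = monomial (Finsupp.single d 1) 1 := rfl
    rw [SetLike.mem_coe, Ideal.mem_colon_span_singleton, hf]
    show (X d : MvPolynomial V K) * monomial (indF s) 1 ∈ cnIdeal K G
    rw [hX, monomial_mul, one_mul]
    obtain ⟨u, huU, hdu⟩ := Finset.mem_biUnion.mp (hDU hdD)
    rw [monomial_mem_cnIdeal_iff]
    refine ⟨u, (indF_le_iff _ _).mpr fun w hw => ?_⟩
    have hNuD : closedNbhd G u ∩ D = {d} := by
      have hcard := (Finset.mem_filter.mp (hU huU)).2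
      obtain ⟨a, ha⟩ := Finset.card_eq_one.mp hcard
      have : d ∈ closedNbhd G u ∩ D := Finset.mem_inter.mpr ⟨hdu, hdD⟩
      rw [ha] at this ⊢
      rw [Finset.mem_singleton.mp this]
    rw [Finsupp.add_apply]
    by_cases hwD : w ∈ D
    · have : w = d := Finset.mem_singleton.mp (hNuD ▸ Finset.mem_inter.mpr ⟨hw, hwD⟩)
      subst this
      rw [Finsupp.single_apply, if_pos rfl]
      omega
    · have hws : w ∈ s := Finset.mem_sdiff.mpr
        ⟨Finset.mem_biUnion.mpr ⟨u, huU, hw⟩, hwD⟩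
      rw [indF_apply, if_pos hws]
      omega

lemma prime_finset_prod {R : Type*} [CommRing R] {p : Ideal R} (hp : p.IsPrime)
    {ι : Type*} {s : Finset ι} {h : ι → R} (hmem : ∏ i ∈ s, h i ∈ p) :
    ∃ i ∈ s, h i ∈ p := by
  classical
  induction s using Finset.induction_on with
  | empty =>
    rw [Finset.prod_empty] at hmem
    exact absurd (Ideal.eq_top_of_isUnit_mem _ hmem isUnit_one) hp.ne_top
  | insert _ _ hx ih =>
    rw [Finset.prod_insert hx] at hmem
    rcases hp.mem_or_mem hmem with h1 | h1
    · exact ⟨_, Finset.mem_insert_self _ _, h1⟩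
    · obtain ⟨i, hi, hip⟩ := ih h1
      exact ⟨i, Finset.mem_insert_of_mem hi, hip⟩

lemma hard_direction {G : SimpleGraph V} {f : MvPolynomial V K} {d : ℕ}
    (hhom : f.IsHomogeneous d)
    (hp : (Submodule.colon (cnIdeal K G) (Ideal.span {f})).IsPrime) :
    ∃ D U : Finset V, IsMinimalDominatingSet G D ∧ U ⊆ privateNbrs G D ∧
      D ⊆ closedNbhdSet G U ∧ (closedNbhdSet G U \ D).card ≤ d := by
  set p := Submodule.colon (cnIdeal K G) (Ideal.span {f}) with hpdef
  have hIp : cnIdeal K G ≤ p := by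
    intro r hr
    exact Ideal.mem_colon_span_singleton.mpr (Ideal.mul_mem_right f _ hr)
  have hfI : f ∉ cnIdeal K G := by
    intro h
    refine hp.ne_top (Ideal.eq_top_iff_one _ |>.mpr ?_)
    exact Ideal.mem_colon_span_singleton.mpr (by rwa [one_mul])
  -- a monomial of f not in the ideal
  have hex : ∃ m ∈ f.support, (monomial m (1 : K)) ∉ cnIdeal K G := by
    by_contra hcon
    push_neg at hcon
    refine hfI ?_
    nth_rewrite 1 [f.as_sum]
    refine Ideal.sum_mem _ fun v hv => ?_
    have : (monomial v (coeff v f) : MvPolynomial V K)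
        = C (coeff v f) * monomial v 1 := by rw [C_mul_monomial, mul_one]
    rw [this]
    exact Ideal.mul_mem_left _ _ (hcon v hv)
  obtain ⟨m, hm, hmI⟩ := hex
  have hm_not : ¬∃ v, indF (closedNbhd G v) ≤ m :=
    fun h => hmI (monomial_mem_cnIdeal_iff.mpr h)
  set A : Finset V := Finset.univ.filter (fun a => (X a : MvPolynomial V K) ∈ p) with hA
  have hXA : ∀ a ∈ A, (X a : MvPolynomial V K) ∈ p := fun a ha => (Finset.mem_filter.mp ha).2
  have hkey : ∀ a ∈ A, ∃ v, indF (closedNbhd G v) ≤ Finsupp.single a 1 + m := by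
    intro a ha
    have hXaf : (X a : MvPolynomial V K) * f ∈ cnIdeal K G :=
      Ideal.mem_colon_span_singleton.mp (hXA a ha)
    have hmem : Finsupp.single a 1 + m ∈ ((X a : MvPolynomial V K) * f).support := by
      rw [mem_support_iff, coeff_X_mul]
      exact mem_support_iff.mp hm
    exact mem_cnIdeal_iff.mp hXaf _ hmem
  have hdisj : ∀ a ∈ A, m a = 0 := by
    intro a ha
    by_contra hma
    obtain ⟨v, hv⟩ := hkey a ha
    refine hm_not ⟨v, (indF_le_iff _ _).mpr fun w hw => ?_⟩
    have := (indF_le_iff _ _).mp hv w hw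
    rw [Finsupp.add_apply, Finsupp.single_apply] at this
    by_cases hwa : w = a
    · subst hwa; omega
    · rw [if_neg (Ne.symm hwa)] at this; omega
  -- A is a dominating set
  have hAdom : IsDominatingSet G A := by
    intro v
    have hgen : (∏ u ∈ closedNbhd G v, (X u : MvPolynomial V K)) ∈ p :=
      hIp (Ideal.subset_span ⟨v, rfl⟩)
    obtain ⟨u, hu, hup⟩ := prime_finset_prod hp hgen
    exact ⟨u, Finset.mem_filter.mpr ⟨Finset.mem_univ _, hup⟩, closedNbhd_comm.mp hu⟩
  -- choose private dominating vertices
  have H : ∀ a : V, ∃ v, a ∈ A →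
      a ∈ closedNbhd G v ∧ closedNbhd G v ∩ A = {a} ∧ closedNbhd G v \ A ⊆ m.support := by
    intro a
    by_cases ha : a ∈ A
    · obtain ⟨v, hv⟩ := hkey a ha
      have hfact : ∀ w ∈ closedNbhd G v, w ≠ a → m w ≠ 0 := by
        intro w hw hwa
        have := (indF_le_iff _ _).mp hv w hw
        rw [Finsupp.add_apply, Finsupp.single_apply, if_neg (Ne.symm hwa)] at this
        omega
      have hav : a ∈ closedNbhd G v := by
        by_contra hav
        refine hm_not ⟨v, (indF_le_iff _ _).mpr fun w hw => ?_⟩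
        have : m w ≠ 0 := hfact w hw (fun h => hav (h ▸ hw))
        omega
      refine ⟨v, fun _ => ⟨hav, ?_, ?_⟩⟩
      · ext w
        simp only [Finset.mem_inter, Finset.mem_singleton]
        constructor
        · rintro ⟨hw, hwA⟩
          by_contra hwa
          exact hfact w hw hwa (hdisj w hwA)
        · rintro rfl; exact ⟨hav, ha⟩
      · intro w hw
        rw [Finset.mem_sdiff] at hw
        have hwa : w ≠ a := fun h => hw.2 (h ▸ ha)
        exact Finsupp.mem_support_iff.mpr (hfact w hw.1 hwa)
    · exact ⟨a, fun h => absurd h ha⟩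
  choose va hva using H
  set U : Finset V := A.image va with hU
  have hmin : IsMinimalDominatingSet G A := by
    refine ⟨hAdom, fun A' hA' hdom' => ?_⟩
    obtain ⟨a, haA, haA'⟩ := Finset.exists_of_ssubset hA'
    obtain ⟨u, huA', hu⟩ := hdom' (va a)
    have huv : u ∈ closedNbhd G (va a) := closedNbhd_comm.mp hu
    have : u ∈ closedNbhd G (va a) ∩ A :=
      Finset.mem_inter.mpr ⟨huv, hA'.subset huA'⟩
    rw [(hva a haA).2.1, Finset.mem_singleton] at this
    exact haA' (this ▸ huA')
  refine ⟨A, U, hmin, ?_, ?_, ?_⟩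
  · intro u hu
    obtain ⟨a, ha, rfl⟩ := Finset.mem_image.mp hu
    refine Finset.mem_filter.mpr ⟨Finset.mem_univ _, ?_⟩
    rw [(hva a ha).2.1, Finset.card_singleton]
  · intro a ha
    exact Finset.mem_biUnion.mpr ⟨va a, Finset.mem_image_of_mem va ha, (hva a ha).1⟩
  · have hsub : closedNbhdSet G U \ A ⊆ m.support := by
      intro w hw
      rw [Finset.mem_sdiff] at hw
      obtain ⟨u, hu, hwu⟩ := Finset.mem_biUnion.mp hw.1
      obtain ⟨a, ha, rfl⟩ := Finset.mem_image.mp hu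
      exact (hva a ha).2.2 (Finset.mem_sdiff.mpr ⟨hwu, hw.2⟩)
    have hdeg : m.degree = d := by
      by_contra hne
      exact (mem_support_iff.mp hm) (hhom.coeff_eq_zero hne)
    calc (closedNbhdSet G U \ A).card ≤ m.support.card := Finset.card_le_card hsub
      _ ≤ ∑ i ∈ m.support, m i := by
          rw [Finset.card_eq_sum_ones]
          exact Finset.sum_le_sum fun i hi => Nat.one_le_iff_ne_zero.mpr
            (Finsupp.mem_support_iff.mp hi)
      _ = d := hdeg


lemma main_aux (K : Type*) [Field K] (G : SimpleGraph V) :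
    vNumber (cnIdeal K G) =
      sInf {n : ℕ | ∃ D U : Finset V, IsMinimalDominatingSet G D ∧
        U ⊆ privateNbrs G D ∧ D ⊆ closedNbhdSet G U ∧
        n = (closedNbhdSet G U \ D).card} := by
  classical
  set I : Ideal (MvPolynomial V K) := cnIdeal K G with hI
  set L : Set ℕ := {d : ℕ | ∃ f : MvPolynomial V K, f.IsHomogeneous d ∧
    Submodule.colon I (Ideal.span {f}) ∈
      associatedPrimes (MvPolynomial V K) (MvPolynomial V K ⧸ I)} with hL
  set R : Set ℕ := {n : ℕ | ∃ D U : Finset V, IsMinimalDominatingSet G D ∧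
        U ⊆ privateNbrs G D ∧ D ⊆ closedNbhdSet G U ∧
        n = (closedNbhdSet G U \ D).card} with hR
  have hvn : vNumber (cnIdeal K G) = sInf L := rfl
  rw [hvn]
  -- R ⊆ L
  have hRL : R ⊆ L := by
    rintro n ⟨D, U, hmin, hU, hDU, rfl⟩
    set s : Finset V := closedNbhdSet G U \ D with hs
    set f : MvPolynomial V K := monomial (indF s) 1 with hf
    refine ⟨f, isHomogeneous_monomial _ (indF_degree s), ?_⟩
    have hcolon := colon_eq_vertexIdeal (K := K) hmin.1 hU hDU
    rw [AssociatedPrimes.mem_iff, isAssociatedPrime_iff]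
    refine ⟨hcolon ▸ vertexIdeal_isPrime D, ⟨Ideal.Quotient.mk I f, ?_⟩⟩
    ext r
    rw [Submodule.mem_colon_singleton, Submodule.mem_bot]
    have hsm : r • (Ideal.Quotient.mk I f) = Ideal.Quotient.mk I (r * f) := by
      rw [← smul_eq_mul, ← Ideal.Quotient.mk_eq_mk, ← Ideal.Quotient.mk_eq_mk,
        Submodule.Quotient.mk_smul]
    rw [hsm, Ideal.Quotient.eq_zero_iff_mem, ← Ideal.mem_colon_span_singleton]
  -- every element of L dominates some element of R
  have hLR : ∀ d ∈ L, ∃ n ∈ R, n ≤ d := by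
    rintro d ⟨f, hhom, hass⟩
    have hp : (Submodule.colon (cnIdeal K G) (Ideal.span {f})).IsPrime :=
      (AssociatedPrimes.mem_iff.mp hass).1
    obtain ⟨D, U, hmin, hU, hDU, hcard⟩ := hard_direction hhom hp
    exact ⟨(closedNbhdSet G U \ D).card, ⟨D, U, hmin, hU, hDU, rfl⟩, hcard⟩
  by_cases hLne : L.Nonempty
  · obtain ⟨n, hnR, hnle⟩ := hLR _ (Nat.sInf_mem hLne)
    apply le_antisymm
    · exact Nat.sInf_le (hRL (Nat.sInf_mem ⟨n, hnR⟩))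
    · exact le_trans (Nat.sInf_le hnR) hnle
  · rw [Set.not_nonempty_iff_eq_empty] at hLne
    have hRe : R = ∅ := Set.eq_empty_of_subset_empty (hLne ▸ hRL)
    rw [hLne, hRe]

end AuxProof

/-- Combinatorial formula for the v-number of the closed neighborhood ideal:
it is the minimum of |N[U] \ D| over minimal dominating sets D and subsets
U ⊆ P_N(D) dominating D. -/
theorem vNumber_cnIdeal_formula {V : Type*} [Fintype V] [DecidableEq V]
    (K : Type*) [Field K] (G : SimpleGraph V) (hG : G.Connected) :
    vNumber (cnIdeal K G) =
      sInf {n : ℕ | ∃ D U : Finset V, IsMinimalDominatingSet G D ∧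
        U ⊆ privateNbrs G D ∧ D ⊆ closedNbhdSet G U ∧
        n = (closedNbhdSet G U \ D).card} := by
  refine (main_aux K G).trans ?_
  congr 1
  ext n
  simp only [Set.mem_setOf_eq]
  constructor <;>
    rintro ⟨D, U, h1, h2, h3, rfl⟩ <;>
    refine ⟨D, U, h1, h2, h3, ?_⟩ <;>
    · congr 1
      ext w
      simp [Finset.mem_sdiff]
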